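/- arXiv:math/0506155 — 2 statements merged into one kernel-verified Lean document; each statement's English description precedes it below -/
import Mathlib

section
/- The number of permutations π of {1, ..., n} having a given displacement pattern α equals the number of partitions of {1, ..., 2n} into pairs (s_i, t_i) realizing the differences {a + n : a ∈ α}; in particular the map π ↦ {(π(i) + n, i) : 1 ≤ i ≤ n} is a bijection between such permutations and such partitions. -/
lemma sum_Icc_one (n : ℕ) : 2 * (∑ x ∈ Finset.Icc 1 n, x) = n * (n+1) := by
  induction n with
  | zero => simp
  | succ n ih =>
    rw [Finset.sum_Icc_succ_top (by omega)]
    ring_nf; ring_nf at ih; omega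

lemma min_sum_finset : ∀ (n : ℕ) (T : Finset ℕ), (∀ x ∈ T, 1 ≤ x) → T.card = n →
    2 * (∑ x ∈ T, x) ≤ n * (n+1) → T = Finset.Icc 1 n := by
  intro n
  induction n with
  | zero => intro T _ hc _; rw [Finset.card_eq_zero.mp hc]; simp
  | succ n ih =>
    intro T hpos hc hsum
    have hne : T.Nonempty := Finset.card_pos.mp (by omega)
    set m := T.max' hne with hm
    have hmT : m ∈ T := T.max'_mem hne
    have hTsub : T ⊆ Finset.Icc 1 m := fun x hx => Finset.mem_Icc.mpr ⟨hpos x hx, T.le_max' x hx⟩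
    have hcard_le : n + 1 ≤ m := by
      have := Finset.card_le_card hTsub
      rw [hc, Nat.card_Icc] at this; omega
    have hsum_split : ∑ x ∈ T, x = m + ∑ x ∈ T.erase m, x := (Finset.add_sum_erase T _ hmT).symm
    have hq : (n+1)*(n+1+1) = n*(n+1) + 2*(n+1) := by ring
    have hT' : T.erase m = Finset.Icc 1 n := by
      apply ih (T.erase m) (fun x hx => hpos x (Finset.mem_of_mem_erase hx))
      · rw [Finset.card_erase_of_mem hmT, hc]; omega
      · omega
    have hsum' : 2 * (∑ x ∈ T.erase m, x) = n * (n+1) := by rw [hT']; exact sum_Icc_one n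
    have hmle : m = n + 1 := by omega
    have : T = insert m (T.erase m) := (Finset.insert_erase hmT).symm
    rw [this, hT', hmle]
    ext x
    simp only [Finset.mem_insert, Finset.mem_Icc]
    omega

lemma icc_split (n : ℕ) :
    (Finset.Icc 1 (2*n)).val = (Finset.Icc 1 n).val + (Finset.Icc (n+1) (2*n)).val := by
  have hd : Disjoint (Finset.Icc 1 n) (Finset.Icc (n+1) (2*n)) := by
    simp only [Finset.disjoint_left, Finset.mem_Icc]; intros; omega
  have hu : (Finset.Icc 1 n).disjUnion (Finset.Icc (n+1) (2*n)) hd = Finset.Icc 1 (2*n) := by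
    apply Finset.ext; intro x
    simp only [Finset.disjUnion_eq_union, Finset.mem_union, Finset.mem_Icc]; omega
  rw [← hu]; rfl

lemma perm_map_univ {n : ℕ} (π : Equiv.Perm (Fin n)) :
    Multiset.map (⇑π) Finset.univ.val = Finset.univ.val := by
  have := congrArg Finset.val (Finset.map_univ_equiv π)
  rwa [Finset.map_val, Equiv.coe_toEmbedding] at this

lemma image_snd_eq (n : ℕ) :
    (Finset.univ.image (fun i : Fin n => i.val + 1)) = Finset.Icc 1 n := by
  ext x; simp only [Finset.mem_image, Finset.mem_univ, true_and, Finset.mem_Icc]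
  constructor
  · rintro ⟨i, rfl⟩; omega
  · intro h; exact ⟨⟨x-1, by omega⟩, by simp; omega⟩

lemma image_fst_eq {n : ℕ} (π : Equiv.Perm (Fin n)) :
    (Finset.univ.image (fun i : Fin n => (π i).val + 1 + n)) = Finset.Icc (n+1) (2*n) := by
  ext x; simp only [Finset.mem_image, Finset.mem_univ, true_and, Finset.mem_Icc]
  constructor
  · rintro ⟨i, rfl⟩; have := (π i).isLt; omega
  · intro h
    refine ⟨π.symm ⟨x - (n+1), by omega⟩, ?_⟩
    rw [Equiv.apply_symm_apply]
    simp; omega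

lemma msum_sub {ι : Type*} (s : Multiset ι) (f g : ι → ℤ) :
    (s.map fun x => f x - g x).sum = (s.map f).sum - (s.map g).sum := by
  induction s using Multiset.induction with
  | empty => simp
  | cons a s ih => simp [ih]; ring

/-- for a multiset `α = {a i}` of integers summing to `0`, the number of
permutations `π` of `{1,...,n}` with displacement multiset `α` equals the number of
partitions of `{1,...,2n}` into pairs realizing the differences `{a i + n}`; in particular
the map `π ↦ {(π(i) + n, i) : 1 ≤ i ≤ n}` is a bijection between them. -/
theorem count_displacement_eq_count_partitions (n : ℕ) (a : Fin n → ℤ)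
    (hsum : ∑ i, a i = 0) :
    (Finset.univ.filter (fun π : Equiv.Perm (Fin n) =>
          Multiset.map (fun i : Fin n => ((π i).val : ℤ) - (i.val : ℤ)) Finset.univ.val
            = Multiset.map a Finset.univ.val)).card
      = ((Finset.Icc 1 (2 * n) ×ˢ Finset.Icc 1 (2 * n)).powerset.filter
          (fun M : Finset (ℕ × ℕ) =>
            M.val.map Prod.fst + M.val.map Prod.snd = (Finset.Icc 1 (2 * n)).val ∧
            (∀ p ∈ M, p.2 < p.1) ∧
            M.val.map (fun p => (p.1 : ℤ) - (p.2 : ℤ))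
              = Multiset.map (fun i => a i + n) Finset.univ.val)).card ∧
    (Finset.univ.filter (fun π : Equiv.Perm (Fin n) =>
          Multiset.map (fun i : Fin n => ((π i).val : ℤ) - (i.val : ℤ)) Finset.univ.val
            = Multiset.map a Finset.univ.val)).image
        (fun π => Finset.univ.image (fun i : Fin n => ((π i).val + 1 + n, i.val + 1)))
      = (Finset.Icc 1 (2 * n) ×ˢ Finset.Icc 1 (2 * n)).powerset.filter
          (fun M : Finset (ℕ × ℕ) =>
            M.val.map Prod.fst + M.val.map Prod.snd = (Finset.Icc 1 (2 * n)).val ∧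
            (∀ p ∈ M, p.2 < p.1) ∧
            M.val.map (fun p => (p.1 : ℤ) - (p.2 : ℤ))
              = Multiset.map (fun i => a i + n) Finset.univ.val) ∧
    Set.InjOn (fun π : Equiv.Perm (Fin n) =>
        Finset.univ.image (fun i : Fin n => ((π i).val + 1 + n, i.val + 1)))
      ((Finset.univ.filter (fun π : Equiv.Perm (Fin n) =>
          Multiset.map (fun i : Fin n => ((π i).val : ℤ) - (i.val : ℤ)) Finset.univ.val
            = Multiset.map a Finset.univ.val)) : Set (Equiv.Perm (Fin n))) := by
  classical
  -- injectivity of the pairing map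
  have hinj : Set.InjOn (fun π : Equiv.Perm (Fin n) =>
        Finset.univ.image (fun i : Fin n => ((π i).val + 1 + n, i.val + 1)))
      ((Finset.univ.filter (fun π : Equiv.Perm (Fin n) =>
          Multiset.map (fun i : Fin n => ((π i).val : ℤ) - (i.val : ℤ)) Finset.univ.val
            = Multiset.map a Finset.univ.val)) : Set (Equiv.Perm (Fin n))) := by
    intro π _ π' _ h
    simp only at h
    ext i
    have hm : ((π i).val + 1 + n, i.val + 1) ∈
        Finset.univ.image (fun j : Fin n => ((π' j).val + 1 + n, j.val + 1)) := by
      rw [← h]; exact Finset.mem_image_of_mem _ (Finset.mem_univ i)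
    obtain ⟨j, -, hj⟩ := Finset.mem_image.mp hm
    have h2 : j.val = i.val := by
      have := congrArg Prod.snd hj; simpa using this
    have h1 : (π' j).val = (π i).val := by
      have := congrArg Prod.fst hj; simp at this; omega
    have : j = i := Fin.ext h2
    rw [this] at h1
    exact h1.symm
  -- image equality
  have himg : (Finset.univ.filter (fun π : Equiv.Perm (Fin n) =>
          Multiset.map (fun i : Fin n => ((π i).val : ℤ) - (i.val : ℤ)) Finset.univ.val
            = Multiset.map a Finset.univ.val)).image
        (fun π => Finset.univ.image (fun i : Fin n => ((π i).val + 1 + n, i.val + 1)))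
      = (Finset.Icc 1 (2 * n) ×ˢ Finset.Icc 1 (2 * n)).powerset.filter
          (fun M : Finset (ℕ × ℕ) =>
            M.val.map Prod.fst + M.val.map Prod.snd = (Finset.Icc 1 (2 * n)).val ∧
            (∀ p ∈ M, p.2 < p.1) ∧
            M.val.map (fun p => (p.1 : ℤ) - (p.2 : ℤ))
              = Multiset.map (fun i => a i + n) Finset.univ.val) := by
    ext M
    simp only [Finset.mem_image, Finset.mem_filter, Finset.mem_powerset, Finset.mem_univ,
      true_and]
    constructor
    · -- forward direction
      rintro ⟨π, hπ, rfl⟩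
      have hginj : Set.InjOn (fun i : Fin n => ((π i).val + 1 + n, i.val + 1))
          (Finset.univ : Finset (Fin n)) := by
        intro i _ j _ hij
        have := congrArg Prod.snd hij
        simp at this
        exact Fin.ext this
      have hval : (Finset.univ.image (fun i : Fin n => ((π i).val + 1 + n, i.val + 1))).val
          = Finset.univ.val.map (fun i : Fin n => ((π i).val + 1 + n, i.val + 1)) :=
        Finset.image_val_of_injOn hginj
      have hfstinj : Set.InjOn (fun i : Fin n => (π i).val + 1 + n)
          (Finset.univ : Finset (Fin n)) := by
        intro i _ j _ hij
        simp only at hij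
        have : π i = π j := Fin.ext (by omega)
        exact π.injective this
      have hsndinj : Set.InjOn (fun i : Fin n => i.val + 1)
          (Finset.univ : Finset (Fin n)) := by
        intro i _ j _ hij; simp only at hij; exact Fin.ext (by omega)
      have hfst : Finset.univ.val.map (fun i : Fin n => (π i).val + 1 + n)
          = (Finset.Icc (n+1) (2*n)).val := by
        rw [← image_fst_eq π, Finset.image_val_of_injOn hfstinj]
      have hsnd : Finset.univ.val.map (fun i : Fin n => i.val + 1)
          = (Finset.Icc 1 n).val := by
        rw [← image_snd_eq n, Finset.image_val_of_injOn hsndinj]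
      refine ⟨?_, ?_, ?_, ?_⟩
      · intro p hp
        obtain ⟨i, -, rfl⟩ := Finset.mem_image.mp hp
        have := (π i).isLt
        have := i.isLt
        simp only [Finset.mem_product, Finset.mem_Icc]
        omega
      · rw [hval, Multiset.map_map, Multiset.map_map]
        have e1 : (Prod.fst ∘ fun i : Fin n => ((π i).val + 1 + n, i.val + 1))
            = fun i : Fin n => (π i).val + 1 + n := rfl
        have e2 : (Prod.snd ∘ fun i : Fin n => ((π i).val + 1 + n, i.val + 1))
            = fun i : Fin n => i.val + 1 := rfl
        rw [e1, e2, hfst, hsnd, icc_split, add_comm]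
      · intro p hp
        obtain ⟨i, -, rfl⟩ := Finset.mem_image.mp hp
        have := i.isLt
        simp only
        omega
      · rw [hval, Multiset.map_map]
        have e3 : ((fun p : ℕ × ℕ => (p.1 : ℤ) - (p.2 : ℤ)) ∘
            fun i : Fin n => ((π i).val + 1 + n, i.val + 1))
            = fun i : Fin n => (((π i).val : ℤ) - (i.val : ℤ)) + n := by
          funext i; simp only [Function.comp_apply]; push_cast; ring
        rw [e3]
        have : Multiset.map (fun i : Fin n => (((π i).val : ℤ) - (i.val : ℤ)) + n)
            Finset.univ.val
            = Multiset.map (fun x : ℤ => x + n)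
                (Multiset.map (fun i : Fin n => ((π i).val : ℤ) - (i.val : ℤ))
                  Finset.univ.val) := by
          rw [Multiset.map_map]; rfl
        rw [this, hπ, Multiset.map_map]; rfl
    · -- backward direction
      rintro ⟨hsub, h1, h2, h3⟩
      -- cardinality of M
      have hcardIcc : Multiset.card (Finset.Icc 1 (2*n)).val = 2*n := by
        rw [← Finset.card_def, Nat.card_Icc]; omega
      have hcard : M.card = n := by
        have := congrArg Multiset.card h1
        simp only [Multiset.card_add, Multiset.card_map] at this
        rw [hcardIcc] at this
        have : 2 * M.card = 2 * n := by rw [Finset.card_def]; omega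
        omega
      -- the multiset of second coordinates
      set S : Multiset ℕ := M.val.map Prod.snd with hS
      set F : Multiset ℕ := M.val.map Prod.fst with hF
      have hS_le : S ≤ (Finset.Icc 1 (2*n)).val := h1 ▸ Multiset.le_add_left S F
      have hS_nodup : S.Nodup := Multiset.nodup_of_le hS_le (Finset.Icc 1 (2*n)).nodup
      set T : Finset ℕ := ⟨S, hS_nodup⟩ with hT
      have hTpos : ∀ x ∈ T, 1 ≤ x := by
        intro x hx
        have : x ∈ (Finset.Icc 1 (2*n)).val := Multiset.subset_of_le hS_le hx
        exact (Finset.mem_Icc.mp this).1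
      have hTcard : T.card = n := by
        rw [Finset.card_def]
        show Multiset.card S = n
        rw [hS, Multiset.card_map, ← Finset.card_def, hcard]
      -- sums
      have hcastsum : ∀ t : Finset ℕ, (t.val.map (fun x : ℕ => (x:ℤ))).sum
          = ((∑ x ∈ t, x : ℕ) : ℤ) := by
        intro t
        rw [Finset.sum_eq_multiset_sum, Multiset.map_id', Nat.cast_multiset_sum]
      have hsumIcc : (2:ℤ) * ((Finset.Icc 1 (2*n)).val.map (fun x : ℕ => (x:ℤ))).sum
          = 2*n*(2*n+1) := by
        have h := sum_Icc_one (2*n)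
        rw [hcastsum]
        have : ((2 * ∑ x ∈ Finset.Icc 1 (2*n), x : ℕ) : ℤ) = ((2*n*(2*n+1) : ℕ) : ℤ) := by
          exact_mod_cast congrArg (fun k : ℕ => (k : ℤ)) h
        push_cast at this ⊢
        linarith
      have hFS : (F.map (fun x : ℕ => (x:ℤ))).sum + (S.map (fun x : ℕ => (x:ℤ))).sum
          = ((Finset.Icc 1 (2*n)).val.map (fun x : ℕ => (x:ℤ))).sum := by
        rw [← Multiset.sum_add, ← Multiset.map_add, h1]
      have hdiffsum : (F.map (fun x : ℕ => (x:ℤ))).sum - (S.map (fun x : ℕ => (x:ℤ))).sum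
          = (n:ℤ) * n := by
        have h3s := congrArg Multiset.sum h3
        have lhs_eq : (M.val.map (fun p : ℕ × ℕ => (p.1:ℤ) - (p.2:ℤ))).sum
            = (F.map (fun x : ℕ => (x:ℤ))).sum - (S.map (fun x : ℕ => (x:ℤ))).sum := by
          rw [msum_sub M.val (fun p => (p.1:ℤ)) (fun p => (p.2:ℤ)), hF, hS,
            Multiset.map_map, Multiset.map_map]
          rfl
        have rhs_eq : (Multiset.map (fun i : Fin n => a i + n) Finset.univ.val).sum
            = (n:ℤ) * n := by
          rw [← Finset.sum_eq_multiset_sum]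
          rw [Finset.sum_add_distrib, hsum, zero_add, Finset.sum_const, Finset.card_univ,
            Fintype.card_fin, nsmul_eq_mul]
        rw [lhs_eq, rhs_eq] at h3s
        exact h3s
      have hTsum : 2 * (∑ x ∈ T, x) ≤ n * (n+1) := by
        have hTS : ((∑ x ∈ T, x : ℕ) : ℤ) = (S.map (fun x : ℕ => (x:ℤ))).sum :=
          (hcastsum T).symm
        have h2S : 2 * (S.map (fun x : ℕ => (x:ℤ))).sum = (n:ℤ) * n + n := by linarith
        have : ((2 * ∑ x ∈ T, x : ℕ) : ℤ) = ((n * (n+1) : ℕ) : ℤ) := by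
          push_cast
          push_cast at hTS
          linarith
        omega
      have hTeq : T = Finset.Icc 1 n := min_sum_finset n T hTpos hTcard hTsum
      have hSeq : S = (Finset.Icc 1 n).val := congrArg Finset.val hTeq
      have hFeq : F = (Finset.Icc (n+1) (2*n)).val := by
        have := h1
        rw [icc_split, ← hSeq] at this
        have h' : F + S = (Finset.Icc (n+1) (2*n)).val + S := by
          rw [this, hSeq, add_comm]
        exact add_right_cancel h'
      have hF_nodup : F.Nodup := by rw [hFeq]; exact (Finset.Icc (n+1) (2*n)).nodup
      -- choose pairs
      have hex : ∀ i : Fin n, ∃ p : ℕ × ℕ, p ∈ M.val ∧ p.2 = i.val + 1 := by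
        intro i
        have hmem : (i.val + 1) ∈ S := by
          rw [hSeq]
          have : (i.val + 1) ∈ Finset.Icc 1 n := Finset.mem_Icc.mpr ⟨by omega, by omega⟩
          exact this
        obtain ⟨p, hp, hp2⟩ := Multiset.mem_map.mp hmem
        exact ⟨p, hp, hp2⟩
      choose p hpM hpsnd using hex
      have hpfst : ∀ i : Fin n, n+1 ≤ (p i).1 ∧ (p i).1 ≤ 2*n := by
        intro i
        have : (p i).1 ∈ F := by rw [hF]; exact Multiset.mem_map_of_mem _ (hpM i)
        rw [hFeq] at this
        exact Finset.mem_Icc.mp this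
      have hnpos : ∀ i : Fin n, (p i).1 - (n+1) < n := fun i => by have := hpfst i; omega
      set f : Fin n → Fin n := fun i => ⟨(p i).1 - (n+1), hnpos i⟩ with hf
      have hfinj : Function.Injective f := by
        intro i j hij
        have hv : (p i).1 - (n+1) = (p j).1 - (n+1) := congrArg Fin.val hij
        have hi := hpfst i; have hj := hpfst j
        have hfst_eq : (p i).1 = (p j).1 := by omega
        have hpij : p i = p j := by
          refine Multiset.inj_on_of_nodup_map ?_ _ (hpM i) _ (hpM j) hfst_eq
          rw [← hF]; exact hF_nodup
        have : (p i).2 = (p j).2 := by rw [hpij]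
        rw [hpsnd i, hpsnd j] at this
        exact Fin.ext (by omega)
      have hfbij : Function.Bijective f := Finite.injective_iff_bijective.mp hfinj
      set π : Equiv.Perm (Fin n) := Equiv.ofBijective f hfbij with hπdef
      have hπcoe : ∀ i, π i = f i := fun i => rfl
      have hg : ∀ i : Fin n, ((π i).val + 1 + n, i.val + 1) = p i := by
        intro i
        have hi := hpfst i
        have h1' : (π i).val = (p i).1 - (n+1) := by rw [hπcoe]
        have : (p i) = ((p i).1, (p i).2) := rfl
        rw [this, Prod.mk.injEq]
        constructor
        · omega
        · exact (hpsnd i).symm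
      have hginj : Set.InjOn (fun i : Fin n => ((π i).val + 1 + n, i.val + 1))
          (Finset.univ : Finset (Fin n)) := by
        intro i _ j _ hij
        have := congrArg Prod.snd hij
        simp only at this
        exact Fin.ext (by omega)
      have hMimg : Finset.univ.image (fun i : Fin n => ((π i).val + 1 + n, i.val + 1)) = M := by
        apply Finset.eq_of_subset_of_card_le
        · intro q hq
          obtain ⟨i, -, rfl⟩ := Finset.mem_image.mp hq
          rw [hg i]
          exact hpM i
        · rw [Finset.card_image_of_injOn hginj, Finset.card_univ, Fintype.card_fin, hcard]
      have hMval : M.val = Finset.univ.val.map (fun i : Fin n => ((π i).val + 1 + n, i.val + 1)) := by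
        rw [← hMimg, Finset.image_val_of_injOn hginj]
      have hdisp : Multiset.map (fun i : Fin n => ((π i).val : ℤ) - (i.val : ℤ)) Finset.univ.val
          = Multiset.map a Finset.univ.val := by
        have h3' := h3
        rw [hMval, Multiset.map_map] at h3'
        have e : ((fun p : ℕ × ℕ => (p.1 : ℤ) - (p.2 : ℤ)) ∘
            fun i : Fin n => ((π i).val + 1 + n, i.val + 1))
            = fun i : Fin n => (((π i).val : ℤ) - (i.val : ℤ)) + n := by
          funext i; simp only [Function.comp_apply]; push_cast; ring
        rw [e] at h3'
        have h4 := congrArg (Multiset.map (fun x : ℤ => x - n)) h3'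
        rw [Multiset.map_map, Multiset.map_map] at h4
        have e1 : ((fun x : ℤ => x - n) ∘ fun i : Fin n => (((π i).val : ℤ) - (i.val : ℤ)) + n)
            = fun i : Fin n => ((π i).val : ℤ) - (i.val : ℤ) := by
          funext i; simp only [Function.comp_apply]; ring
        have e2 : ((fun x : ℤ => x - n) ∘ fun i : Fin n => a i + n) = a := by
          funext i; simp only [Function.comp_apply]; ring
        rw [e1, e2] at h4
        exact h4
      exact ⟨π, hdisp, hMimg⟩
  refine ⟨?_, himg, hinj⟩
  rw [← himg]
  exact (Finset.card_image_of_injOn hinj).symm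
end

section
/- For a set A = {a_1 > a_2 > ... > a_n} of distinct positive integers, if {1, ..., 2n} can be partitioned into pairs with differences exactly the elements of A, then the equivalent condition of Corollary necperf holds: the number of even a_i is even, and for every 1 ≤ m ≤ n, a_1 + ... + a_m ≤ m(2n - m). In particular, none of the sets {3} (n=1), {2,4} (n=2), {2,4,5} (n=3), {3,4,5,6} (n=4) is a perfect Skolem set, since each violates the density condition despite satisfying the parity condition. -/
/-- A set `A` of `n` distinct positive integers is a perfect Skolem set if `{1,...,2n}`
(with `n = |A|`) can be partitioned into `n` pairs whose differences are exactly the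
elements of `A`. -/
def IsPerfectSkolemSet (A : Finset ℕ) : Prop :=
  ∃ s t : Fin A.card → ℕ, (∀ i, t i < s i) ∧
    Multiset.map s Finset.univ.val + Multiset.map t Finset.univ.val
      = (Finset.Icc 1 (2 * A.card)).val ∧
    Multiset.map (fun i => s i - t i) Finset.univ.val = A.val

lemma aux_lower (T : Finset ℕ) : T.card * T.card ≤ T.card + 2 * ∑ x ∈ T, x := by
  induction T using Finset.strongInduction with
  | _ T ih =>
    rcases T.eq_empty_or_nonempty with rfl | hne
    · simp
    · set x := T.max' hne with hxdef
      have hx : x ∈ T := T.max'_mem hne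
      have hsub : T.erase x ⊆ Finset.range x := by
        intro y hy
        rw [Finset.mem_range]
        have h1 := Finset.le_max' T y (Finset.mem_of_mem_erase hy)
        have h2 := Finset.ne_of_mem_erase hy
        omega
      have hcard : (T.erase x).card ≤ x :=
        le_trans (Finset.card_le_card hsub) (by simp)
      have ih' := ih (T.erase x) (Finset.erase_ssubset hx)
      have hc : T.card = (T.erase x).card + 1 := by
        rw [Finset.card_erase_of_mem hx]
        have := Finset.card_pos.mpr hne
        omega
      have hsum : ∑ y ∈ T, y = x + ∑ y ∈ T.erase x, y :=
        (Finset.add_sum_erase _ _ hx).symm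
      set k := (T.erase x).card
      rw [hc, hsum]
      have hexp : (k+1)*(k+1) = k*k + 2*k + 1 := by ring
      linarith

lemma aux_lower_pos (T : Finset ℕ) (h : ∀ x ∈ T, 1 ≤ x) :
    T.card * T.card + T.card ≤ 2 * ∑ x ∈ T, x := by
  classical
  set T' := T.image (fun x => x - 1) with hT'
  have hinj : Set.InjOn (fun x => x - 1) T := by
    intro a ha b hb hab
    have := h a ha; have := h b hb
    simp only at hab; omega
  have hcard : T'.card = T.card := Finset.card_image_of_injOn hinj
  have hsum' : ∑ x ∈ T', x = ∑ x ∈ T, (x - 1) := Finset.sum_image (fun a ha b hb => hinj ha hb)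
  have hsub : ∑ x ∈ T, (x - 1) = ∑ x ∈ T, x - ∑ x ∈ T, 1 :=
    Finset.sum_tsub_distrib T (fun x hx => h x hx)
  have hcardle : T.card ≤ ∑ x ∈ T, x := by
    calc T.card = ∑ _x ∈ T, 1 := by simp
    _ ≤ ∑ x ∈ T, x := Finset.sum_le_sum h
  have hEq : ∑ x ∈ T', x + T.card = ∑ x ∈ T, x := by
    rw [hsum', hsub]
    simp only [Finset.sum_const, smul_eq_mul, mul_one]
    omega
  have h0 := aux_lower T'
  rw [hcard] at h0
  linarith

lemma aux_upper (S : Finset ℕ) (N : ℕ) (h : ∀ x ∈ S, x ≤ N) :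
    2 * ∑ x ∈ S, x + S.card * S.card ≤ S.card + 2 * (S.card * N) := by
  classical
  set S' := S.image (fun x => N - x) with hS'
  have hinj : Set.InjOn (fun x => N - x) S := by
    intro a ha b hb hab
    have := h a ha; have := h b hb
    simp only at hab; omega
  have hcard : S'.card = S.card := Finset.card_image_of_injOn hinj
  have hsum' : ∑ x ∈ S', x = ∑ x ∈ S, (N - x) := Finset.sum_image (fun a ha b hb => hinj ha hb)
  have hsub : ∑ x ∈ S, (N - x) = ∑ x ∈ S, N - ∑ x ∈ S, x :=
    Finset.sum_tsub_distrib S (fun x hx => h x hx)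
  have hcardle : ∑ x ∈ S, x ≤ S.card * N := by
    calc ∑ x ∈ S, x ≤ ∑ _x ∈ S, N := Finset.sum_le_sum h
    _ = S.card * N := by simp [mul_comm]
  have hEq : ∑ x ∈ S', x + ∑ x ∈ S, x = S.card * N := by
    rw [hsum', hsub]
    simp only [Finset.sum_const, smul_eq_mul]
    omega
  have h0 := aux_lower S'
  rw [hcard] at h0
  linarith


lemma skolem_main (A : Finset ℕ) (hpos : ∀ x ∈ A, 0 < x) (hA : IsPerfectSkolemSet A) :
    Even ((A.filter (fun x => Even x)).card) ∧
    ∀ m, 1 ≤ m → m ≤ A.card → ∀ B ⊆ A, B.card = m →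
      ∑ x ∈ B, x ≤ m * (2 * A.card - m) := by
  classical
  obtain ⟨s, t, hst, hsum, hdiff⟩ := hA
  set d : Fin A.card → ℕ := fun i => s i - t i with hd
  -- nodup facts
  have hnd : (Multiset.map s Finset.univ.val + Multiset.map t Finset.univ.val).Nodup := by
    rw [hsum]; exact (Finset.Icc 1 (2 * A.card)).nodup
  obtain ⟨hs_nd, ht_nd, -⟩ := Multiset.nodup_add.mp hnd
  have hd_nd : (Multiset.map d Finset.univ.val).Nodup := by
    rw [hdiff]; exact A.nodup
  have hmemu : ∀ i : Fin A.card, i ∈ (Finset.univ : Finset (Fin A.card)).val :=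
    fun i => Finset.mem_def.mp (Finset.mem_univ i)
  have hs_inj : Function.Injective s := fun a b h =>
    Multiset.inj_on_of_nodup_map hs_nd a (hmemu a) b (hmemu b) h
  have ht_inj : Function.Injective t := fun a b h =>
    Multiset.inj_on_of_nodup_map ht_nd a (hmemu a) b (hmemu b) h
  have hd_inj : Function.Injective d := fun a b h =>
    Multiset.inj_on_of_nodup_map hd_nd a (hmemu a) b (hmemu b) h
  -- membership facts
  have hs_mem : ∀ i, s i ∈ Finset.Icc 1 (2 * A.card) := by
    intro i
    rw [Finset.mem_def, ← hsum]
    exact Multiset.mem_add.mpr (Or.inl (Multiset.mem_map_of_mem s (hmemu i)))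
  have ht_mem : ∀ i, t i ∈ Finset.Icc 1 (2 * A.card) := by
    intro i
    rw [Finset.mem_def, ← hsum]
    exact Multiset.mem_add.mpr (Or.inr (Multiset.mem_map_of_mem t (hmemu i)))
  have hs_le : ∀ i, s i ≤ 2 * A.card := fun i => (Finset.mem_Icc.mp (hs_mem i)).2
  have ht_ge : ∀ i, 1 ≤ t i := fun i => (Finset.mem_Icc.mp (ht_mem i)).1
  -- image of d is A
  have himg : Finset.image d Finset.univ = A := by
    ext a
    simp only [Finset.mem_image, Finset.mem_univ, true_and]
    constructor
    · rintro ⟨i, rfl⟩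
      exact Finset.mem_def.mpr (hdiff ▸ Multiset.mem_map_of_mem d (hmemu i))
    · intro ha
      have : a ∈ Multiset.map d Finset.univ.val := by
        rw [hdiff]; exact Finset.mem_def.mp ha
      obtain ⟨i, -, rfl⟩ := Multiset.mem_map.mp this
      exact ⟨i, rfl⟩
  -- sum identities
  have hsum_st : ∑ i, s i + ∑ i, t i = ∑ x ∈ Finset.Icc 1 (2 * A.card), x := by
    have h0 := congrArg Multiset.sum hsum
    rw [Multiset.sum_add] at h0
    rw [Finset.sum_eq_multiset_sum, Finset.sum_eq_multiset_sum, Finset.sum_eq_multiset_sum,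
      Multiset.map_id']
    exact h0
  have hA_sum : ∑ x ∈ A, x = ∑ i, d i := by
    rw [Finset.sum_eq_multiset_sum, Finset.sum_eq_multiset_sum, Multiset.map_id', ← hdiff]
  have hts : ∀ i, t i ≤ s i := fun i => le_of_lt (hst i)
  have hdt : ∑ i, d i + ∑ i, t i = ∑ i, s i := by
    rw [← Finset.sum_add_distrib]
    exact Finset.sum_congr rfl fun i _ => Nat.sub_add_cancel (hts i)
  constructor
  · -- parity
    set G := ∑ x ∈ Finset.Icc 1 (2 * A.card), x with hG
    have hins : Finset.range (2 * A.card + 1) = insert 0 (Finset.Icc 1 (2 * A.card)) := by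
      ext x; simp; omega
    have hGauss : G * 2 = (2 * A.card + 1) * (2 * A.card) := by
      have h0 := Finset.sum_range_id_mul_two (2 * A.card + 1)
      rw [hins, Finset.sum_insert (by simp)] at h0
      simpa using h0
    have hGK : G = A.card * (2 * A.card + 1) := by
      have : (2 * A.card + 1) * (2 * A.card) = 2 * (A.card * (2 * A.card + 1)) := by ring
      omega
    have hGn : Even G ↔ Even A.card := by
      rw [hGK, Nat.even_mul]
      simp [Nat.even_add_one, Nat.even_mul]
    have hAG : ∑ x ∈ A, x + 2 * ∑ i, t i = G := by
      rw [hA_sum]; omega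
    have hEA : Even (∑ x ∈ A, x) ↔ Even A.card := by
      rw [← hGn, ← hAG]
      simp [Nat.even_add, Nat.even_mul]
    have hEo : Even (∑ x ∈ A, x) ↔ Even ((A.filter fun x => Odd x).card) := by
      simpa using Finset.even_sum_iff_even_card_odd (s := A) (fun x => x)
    have hcards : (A.filter fun x => Even x).card + (A.filter fun x => Odd x).card
        = A.card := by
      have h0 := Finset.card_filter_add_card_filter_not (s := A)
        (p := fun x => Even x)
      simpa [Nat.not_even_iff_odd] using h0
    simp only [Nat.even_iff] at hEA hEo hcards ⊢
    omega
  · -- density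
    intro m hm1 hmn B hBA hBm
    set I : Finset (Fin A.card) := Finset.univ.filter (fun i => d i ∈ B) with hI
    have hI_img : I.image d = B := by
      ext b
      simp only [hI, Finset.mem_image, Finset.mem_filter, Finset.mem_univ, true_and]
      constructor
      · rintro ⟨i, hib, rfl⟩; exact hib
      · intro hb
        have : b ∈ Finset.image d Finset.univ := by rw [himg]; exact hBA hb
        obtain ⟨i, -, rfl⟩ := Finset.mem_image.mp this
        exact ⟨i, hb, rfl⟩
    have hI_card : I.card = m := by
      rw [← hBm, ← hI_img, Finset.card_image_of_injective _ hd_inj]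
    have hsumB : ∑ i ∈ I, d i = ∑ b ∈ B, b := by
      rw [← hI_img, Finset.sum_image (fun a _ b _ h => hd_inj h)]
    set S : Finset ℕ := I.image s with hS
    set T : Finset ℕ := I.image t with hT
    have hS_card : S.card = m := by rw [hS, Finset.card_image_of_injective _ hs_inj, hI_card]
    have hT_card : T.card = m := by rw [hT, Finset.card_image_of_injective _ ht_inj, hI_card]
    have hS_sum : ∑ x ∈ S, x = ∑ i ∈ I, s i := Finset.sum_image (fun a _ b _ h => hs_inj h)
    have hT_sum : ∑ x ∈ T, x = ∑ i ∈ I, t i := Finset.sum_image (fun a _ b _ h => ht_inj h)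
    have hS_le : ∀ x ∈ S, x ≤ 2 * A.card := by
      intro x hx; obtain ⟨i, -, rfl⟩ := Finset.mem_image.mp hx; exact hs_le i
    have hT_ge : ∀ x ∈ T, 1 ≤ x := by
      intro x hx; obtain ⟨i, -, rfl⟩ := Finset.mem_image.mp hx; exact ht_ge i
    have hup := aux_upper S (2 * A.card) hS_le
    have hlo := aux_lower_pos T hT_ge
    rw [hS_card, hS_sum] at hup
    rw [hT_card, hT_sum] at hlo
    have hPQ : ∑ b ∈ B, b + ∑ i ∈ I, t i = ∑ i ∈ I, s i := by
      rw [← hsumB, ← Finset.sum_add_distrib]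
      exact Finset.sum_congr rfl fun i _ => Nat.sub_add_cancel (hts i)
    have key : ∑ b ∈ B, b + m * m ≤ m * (2 * A.card) := by linarith
    rw [Nat.mul_sub_left_distrib]
    exact Nat.le_sub_of_add_le key


/-- every perfect Skolem set `A` of positive integers satisfies the parity
condition (the number of even elements is even) and the density condition (the sum of any
`m` elements — in particular the `m` largest — is at most `m(2n - m)` for `1 ≤ m ≤ n`,
`n = |A|`). In particular none of `{3}`, `{2,4}`, `{2,4,5}`, `{3,4,5,6}` is a perfect
Skolem set (each violates the density condition while satisfying the parity condition). -/
theorem perfect_skolem_set_necessary :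
    (∀ A : Finset ℕ, (∀ x ∈ A, 0 < x) → IsPerfectSkolemSet A →
      Even ((A.filter (fun x => Even x)).card) ∧
      ∀ m, 1 ≤ m → m ≤ A.card → ∀ B ⊆ A, B.card = m →
        ∑ x ∈ B, x ≤ m * (2 * A.card - m)) ∧
    ¬ IsPerfectSkolemSet {3} ∧
    ¬ IsPerfectSkolemSet {2, 4} ∧
    ¬ IsPerfectSkolemSet {2, 4, 5} ∧
    ¬ IsPerfectSkolemSet {3, 4, 5, 6} := by
  refine ⟨skolem_main, ?_, ?_, ?_, ?_⟩
  · intro h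
    have := (skolem_main {3} (by decide) h).2 1 le_rfl (by decide) {3}
      (by decide) (by decide)
    simp at this
  · intro h
    have := (skolem_main {2, 4} (by decide) h).2 1 (by norm_num) (by decide) {4}
      (by decide) (by decide)
    simp at this
  · intro h
    have := (skolem_main {2, 4, 5} (by decide) h).2 2 (by norm_num) (by decide) {4, 5}
      (by decide) (by decide)
    simp [Finset.sum_insert] at this
  · intro h
    have := (skolem_main {3, 4, 5, 6} (by decide) h).2 4 (by norm_num) (by decide)
      {3, 4, 5, 6} (by decide) (by decide)
    simp [Finset.sum_insert] at this
end
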